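/- Let φ ∈ C²(Ω) be positive, η ∈ C²(Ω). Then Δ(η²/φ)·Δφ = [−(η/φ·Δφ − Δη)² + (Δη)²] + 2(Δφ/φ)·|∇η − (η/φ)∇φ|² pointwise on Ω. -/

import Mathlib

/-!
Along a direction `v`, put `u = η / φ`. Then `∂ᵥ(η² / φ) = 2 u ∂ᵥη - u² ∂ᵥφ` and
`∂ᵥu = (∂ᵥη - u ∂ᵥφ) / φ`, so differentiating once more the two terms containing `∂ᵥu` combine to
`(2 / φ) (∂ᵥη - u ∂ᵥφ)²`. Summing over the coordinate directions gives
`Δ(η² / φ) = 2 u Δη - u² Δφ + (2 / φ) |∇η - u ∇φ|²`, and multiplying by `Δφ` and completing the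
square `2 u Δη Δφ - u² (Δφ)² = (Δη)² - (u Δφ - Δη)²` yields the identity.
-/

open MeasureTheory

noncomputable def lap {d : ℕ} (f : EuclideanSpace ℝ (Fin d) → ℝ)
    (x : EuclideanSpace ℝ (Fin d)) : ℝ :=
  ∑ i : Fin d, fderiv ℝ (fun y => fderiv ℝ f y (EuclideanSpace.single i 1)) x
    (EuclideanSpace.single i 1)

open Filter Topology

section DirectionalDerivatives

variable {E : Type*} [NormedAddCommGroup E] [NormedSpace ℝ E] {f g : E → ℝ} {x : E}

theorem fderiv_div_apply (hf : DifferentiableAt ℝ f x) (hg : DifferentiableAt ℝ g x)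
    (hgx : g x ≠ 0) (v : E) :
    fderiv ℝ (fun y => f y / g y) x v =
      (fderiv ℝ f x v - f x / g x * fderiv ℝ g x v) / g x := by
  have hline : HasLineDerivAt ℝ (fun y => f y / g y) _ x v :=
    (hf.hasFDerivAt.hasLineDerivAt v).div (hg.hasFDerivAt.hasLineDerivAt v) (by simpa)
  rw [← DifferentiableAt.lineDeriv_eq_fderiv (by fun_prop (disch := assumption)),
    hline.lineDeriv]
  simp only [zero_smul, add_zero]
  field_simp

theorem fderiv_sq_div_apply (hf : DifferentiableAt ℝ f x) (hg : DifferentiableAt ℝ g x)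
    (hgx : g x ≠ 0) (v : E) :
    fderiv ℝ (fun y => f y ^ 2 / g y) x v =
      2 * (f x / g x) * fderiv ℝ f x v - (f x / g x) ^ 2 * fderiv ℝ g x v := by
  have hline : HasLineDerivAt ℝ (fun y => f y ^ 2 / g y) _ x v :=
    ((hf.hasFDerivAt.hasLineDerivAt v).pow 2).div (hg.hasFDerivAt.hasLineDerivAt v) (by simpa)
  rw [← DifferentiableAt.lineDeriv_eq_fderiv (by fun_prop (disch := assumption)),
    hline.lineDeriv]
  simp only [zero_smul, add_zero, Pi.pow_apply]
  field_simp
  ring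

theorem ContDiffAt.differentiableAt_fderiv_apply (hf : ContDiffAt ℝ 2 f x) (v : E) :
    DifferentiableAt ℝ (fun y => fderiv ℝ f y v) x :=
  ((hf.fderiv_right (m := 1) le_rfl).differentiableAt one_ne_zero).clm_apply
    (differentiableAt_const v)

theorem fderiv_fderiv_sq_div_apply (hf : ContDiffAt ℝ 2 f x) (hg : ContDiffAt ℝ 2 g x)
    (hgx : g x ≠ 0) (v : E) :
    fderiv ℝ (fun y => fderiv ℝ (fun z => f z ^ 2 / g z) y v) x v =
      2 * (f x / g x) * fderiv ℝ (fun y => fderiv ℝ f y v) x v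
        - (f x / g x) ^ 2 * fderiv ℝ (fun y => fderiv ℝ g y v) x v
        + 2 / g x * (fderiv ℝ f x v - f x / g x * fderiv ℝ g x v) ^ 2 := by
  have hfirst : (fun y => fderiv ℝ (fun z => f z ^ 2 / g z) y v) =ᶠ[𝓝 x]
      fun y => 2 * (f y / g y) * fderiv ℝ f y v - (f y / g y) ^ 2 * fderiv ℝ g y v := by
    filter_upwards [hf.eventually (by simp), hg.eventually (by simp),
      hg.continuousAt.eventually_ne hgx] with y hfy hgy hgy0
    exact fderiv_sq_div_apply (hfy.differentiableAt two_ne_zero)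
      (hgy.differentiableAt two_ne_zero) hgy0 v
  have hf1 := hf.differentiableAt two_ne_zero
  have hg1 := hg.differentiableAt two_ne_zero
  have hu : HasFDerivAt (fun y => f y / g y) (fderiv ℝ (fun y => f y / g y) x) x :=
    DifferentiableAt.hasFDerivAt (by fun_prop (disch := assumption))
  have hDf := (hf.differentiableAt_fderiv_apply v).hasFDerivAt
  have hDg := (hg.differentiableAt_fderiv_apply v).hasFDerivAt
  rw [hfirst.fderiv_eq, (((hu.const_mul 2).fun_mul hDf).fun_sub ((hu.pow 2).fun_mul hDg)).fderiv]
  simp only [Nat.add_one_sub_one, pow_one, nsmul_eq_mul, Nat.cast_ofNat,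
    sub_apply, add_apply, smul_apply, smul_eq_mul]
  rw [fderiv_div_apply hf1 hg1 hgx]
  field_simp
  ring

end DirectionalDerivatives

section Laplacian

variable {d : ℕ} {f g : EuclideanSpace ℝ (Fin d) → ℝ} {x : EuclideanSpace ℝ (Fin d)}

theorem fderiv_apply_single_eq_gradient (f : EuclideanSpace ℝ (Fin d) → ℝ)
    (x : EuclideanSpace ℝ (Fin d)) (i : Fin d) : fderiv ℝ f x (EuclideanSpace.single i 1) = gradient f x i := by
  rw [← inner_gradient_left, EuclideanSpace.inner_single_right]
  simp

theorem lap_sq_div (hf : ContDiffAt ℝ 2 f x) (hg : ContDiffAt ℝ 2 g x) (hgx : g x ≠ 0) :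
    lap (fun y => f y ^ 2 / g y) x =
      2 * (f x / g x) * lap f x - (f x / g x) ^ 2 * lap g x
        + 2 / g x * ‖gradient f x - (f x / g x) • gradient g x‖ ^ 2 := by
  simp only [lap, fderiv_fderiv_sq_div_apply hf hg hgx, EuclideanSpace.norm_sq_eq,
    PiLp.sub_apply, PiLp.smul_apply, smul_eq_mul, Real.norm_eq_abs, sq_abs,
    ← fderiv_apply_single_eq_gradient, Finset.sum_add_distrib, Finset.sum_sub_distrib,
    Finset.mul_sum]

end Laplacian

theorem stmt_1 {d : ℕ} (Ω : Set (EuclideanSpace ℝ (Fin d))) (hΩ : IsOpen Ω)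
    (φ η : EuclideanSpace ℝ (Fin d) → ℝ)
    (hφ : ContDiffOn ℝ 2 φ Ω) (hη : ContDiffOn ℝ 2 η Ω)
    (hφpos : ∀ x ∈ Ω, 0 < φ x) :
    ∀ x ∈ Ω,
      lap (fun y => (η y) ^ 2 / φ y) x * lap φ x =
        (-(η x / φ x * lap φ x - lap η x) ^ 2 + (lap η x) ^ 2)
          + 2 * (lap φ x / φ x) *
            ‖gradient η x - (η x / φ x) • gradient φ x‖ ^ 2 := by
  intro x hx
  rw [lap_sq_div (hη.contDiffAt (hΩ.mem_nhds hx)) (hφ.contDiffAt (hΩ.mem_nhds hx))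
    (hφpos x hx).ne']
  ring
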